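/- Assume α < 1/(4n) and β > 16·n^{n+1}. Then for every realization of the disjoint neighbor sets N_i^+(t), N_i^-(t) ⊆ V \ {i} and attention values B_t, D_t ∈ {0,1}, one step of the state-flipping update satisfies M(t+1) ≥ M(t)/(2n). -/

import Mathlib

/-!
Suppose `M(t+1) < M(t)/(2n)` and write `M = M(t)`. Since `α < 1/(4n)`, the attraction term moves
a state by less than `M/2`; hence `D_t = 1` and at every node the repulsion term
`β ∑_{N_i^-} (s_i + s_j)` lies within `2M/3` of `s_i`. If the deficit `M - |s_i|` is small, averaging
over `N_i^-` yields a neighbour `j`, of sign opposite to `s_i`, whose deficit is strictly larger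
but at most `n (M - |s_i|) + 2M/β`. Starting from a node with `|s_i| = M`, the deficit after
`m` steps of such a walk stays below `2M(n^m - 1)/β`, which is tiny for `m ≤ n` because
`β > 16 n^(n+1)`; so the walk runs through `n + 1` nodes with strictly increasing deficits,
which is impossible.
-/

/-- The maximum absolute state `M = max_{i ∈ V} |x i|`. -/
noncomputable def Mmax {n : ℕ} (hn : 3 ≤ n) (x : Fin n → ℝ) : ℝ :=
  Finset.univ.sup' ⟨⟨0, by omega⟩, Finset.mem_univ _⟩ fun i => |x i|

open Finset

section Chain

variable {ι : Type*} [Fintype ι] (v : ι → ℝ) (θ : ℕ → ℝ)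

theorem le_card_filter_lt_of_forall_exists_lt_le
    (hstep : ∀ m < Fintype.card ι, ∀ i, v i ≤ θ m → ∃ j, v i < v j ∧ v j ≤ θ (m + 1)) :
    ∀ k m, m + k ≤ Fintype.card ι → ∀ i, v i ≤ θ m → k ≤ #{j | v i < v j} := by
  intro k
  induction k with
  | zero => simp
  | succ k ih =>
    intro m hm i hi
    obtain ⟨j, hij, hj⟩ := hstep m (by omega) i hi
    have hsub : ({l | v j < v l} : Finset ι) ⊂ ({l | v i < v l} : Finset ι) := by
      refine (ssubset_iff_of_subset fun l hl => ?_).2 ⟨j, by simpa using hij, by simp⟩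
      simp only [mem_filter, mem_univ, true_and] at hl ⊢
      exact hij.trans hl
    exact (ih (m + 1) (by omega) j hj).trans_lt (card_lt_card hsub)

theorem lt_of_forall_exists_lt_le
    (hstep : ∀ m < Fintype.card ι, ∀ i, v i ≤ θ m → ∃ j, v i < v j ∧ v j ≤ θ (m + 1))
    (i : ι) : θ 0 < v i := by
  by_contra! hi
  have hle := le_card_filter_lt_of_forall_exists_lt_le v θ hstep (Fintype.card ι) 0 (by omega) i hi
  have hlt : #{j | v i < v j} < Fintype.card ι := card_lt_univ_of_notMem (x := i) (by simp)
  omega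

end Chain

section Neighbours

variable {ι : Type*} {s : ι → ℝ} {M : ℝ}

theorem abs_sum_sub_le (hs : ∀ j, |s j| ≤ M) (i : ι) (N : Finset ι) :
    |∑ j ∈ N, (s i - s j)| ≤ #N * (2 * M) := by
  refine (abs_sum_le_sum_abs _ _).trans ?_
  rw [← nsmul_eq_mul]
  refine sum_le_card_nsmul _ _ _ fun j _ => ?_
  linarith [abs_sub (s i) (s j), hs i, hs j]

theorem abs_attraction_lt {α B : ℝ} {n : ℕ} {N : Finset ι} (hs : ∀ j, |s j| ≤ M) (hM : 0 < M)
    (hα : 0 < α) (hαn : α < 1 / (4 * (n : ℝ))) (hB : B = 0 ∨ B = 1) (hN : #N ≤ n) (i : ι) :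
    |α * B * ∑ j ∈ N, (s i - s j)| < M / 2 := by
  rcases hB with rfl | rfl
  · simpa using hM
  have hn : 0 < 4 * (n : ℝ) := one_div_pos.1 (hα.trans hαn)
  have hαn' : α * (4 * n) < 1 := (lt_div_iff₀ hn).1 hαn
  have hN' : (#N : ℝ) ≤ n := by exact_mod_cast hN
  rw [mul_one, abs_mul, abs_of_pos hα]
  calc α * |∑ j ∈ N, (s i - s j)| ≤ α * (n * (2 * M)) :=
        mul_le_mul_of_nonneg_left ((abs_sum_sub_le hs i N).trans (by gcongr)) hα.le
    _ < M / 2 := by nlinarith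

theorem exists_repelled_neighbor_of_nonneg {β ρ : ℝ} {N : Finset ι} {n : ℕ} {i : ι}
    (hs : ∀ j, |s j| ≤ M) (hN : #N ≤ n) (hβ : 0 < β)
    (hrep : |β * ∑ j ∈ N, (s i + s j) - s i| ≤ ρ) (hρ : ρ < s i)
    (hbound : n * (M - s i) + (M + ρ) / β ≤ M) :
    ∃ j ∈ N, M - s i < M - |s j| ∧ M - |s j| ≤ n * (M - s i) + (M + ρ) / β := by
  set T := ∑ j ∈ N, (s i + s j)
  have hrep' := abs_le.1 hrep
  have hsi := abs_le.1 (hs i)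
  have hT : 0 < T := pos_of_mul_pos_right (by linarith) hβ.le
  have hTle : T ≤ (M + ρ) / β := by rw [le_div_iff₀ hβ]; linarith
  have hsum : ∑ j ∈ N, (M + s j) = #N * (M - s i) + T := by
    simp only [T, sum_add_distrib, sum_const, nsmul_eq_mul]; ring
  obtain ⟨j, hjN, hij⟩ : ∃ j ∈ N, M - s i < M + s j := by
    refine exists_lt_of_sum_lt ?_
    rw [hsum, sum_const, nsmul_eq_mul]
    linarith
  have hj : M + s j ≤ n * (M - s i) + (M + ρ) / β :=
    calc M + s j ≤ ∑ l ∈ N, (M + s l) :=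
          single_le_sum (f := fun l => M + s l) (fun l _ => by linarith [abs_le.1 (hs l)]) hjN
      _ = #N * (M - s i) + T := hsum
      _ ≤ n * (M - s i) + (M + ρ) / β := by
          gcongr
          linarith
  have hsj : |s j| = -s j := abs_of_nonpos (by linarith)
  exact ⟨j, hjN, by rw [hsj]; linarith, by rw [hsj]; linarith⟩

theorem exists_repelled_neighbor {β ρ : ℝ} {N : Finset ι} {n : ℕ} {i : ι}
    (hs : ∀ j, |s j| ≤ M) (hN : #N ≤ n) (hβ : 0 < β)
    (hrep : |β * ∑ j ∈ N, (s i + s j) - s i| ≤ ρ) (hρ : ρ < |s i|)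
    (hbound : n * (M - |s i|) + (M + ρ) / β ≤ M) :
    ∃ j ∈ N, M - |s i| < M - |s j| ∧ M - |s j| ≤ n * (M - |s i|) + (M + ρ) / β := by
  rcases le_or_gt 0 (s i) with hi | hi
  · rw [abs_of_nonneg hi] at hρ hbound ⊢
    exact exists_repelled_neighbor_of_nonneg hs hN hβ hrep hρ hbound
  · rw [abs_of_neg hi] at hρ hbound ⊢
    have hrep' : |β * ∑ j ∈ N, (-s i + -s j) - -s i| ≤ ρ := by
      rw [← abs_neg]; convert hrep using 2; simp only [← neg_add, sum_neg_distrib]; ring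
    simpa using exists_repelled_neighbor_of_nonneg (s := -s) (by simpa using hs) hN hβ hrep' hρ hbound

theorem exists_lt_abs_sum_add_sub [Fintype ι] {β : ℝ} (N : ι → Finset ι)
    (hcard : 2 ≤ Fintype.card ι) (hs : ∀ j, |s j| ≤ M) (hM : 0 < M) {i₀ : ι} (hi₀ : |s i₀| = M)
    (hβ : 16 * (Fintype.card ι : ℝ) ^ (Fintype.card ι + 1) < β) :
    ∃ i, 2 * M / 3 < |β * ∑ j ∈ N i, (s i + s j) - s i| := by
  by_contra! hrep
  set n := Fintype.card ι
  have hn : (2 : ℝ) ≤ n := by exact_mod_cast hcard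
  have hβ16 : 16 < β := by
    have : (1 : ℝ) ≤ (n : ℝ) ^ (n + 1) := one_le_pow₀ (by linarith)
    linarith
  have hβ0 : 0 < β := by linarith
  set θ : ℕ → ℝ := fun m => 2 * M * ((n : ℝ) ^ m - 1) / β
  have hθ_small : ∀ m < n, 8 * n * θ m ≤ M := by
    intro m hm
    have hpow : (n : ℝ) ^ m ≤ (n : ℝ) ^ n := pow_le_pow_right₀ (by linarith) hm.le
    have hθ : 8 * n * θ m = 16 * M * (n * (n ^ m - 1)) / β := by simp only [θ]; ring
    rw [hθ, div_le_iff₀ hβ0]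
    have : (n : ℝ) * (n ^ m - 1) ≤ n ^ (n + 1) := by rw [pow_succ]; nlinarith
    nlinarith
  have hθ_succ : ∀ m, n * θ m + 2 * M / β ≤ θ (m + 1) := by
    intro m
    have : θ (m + 1) - (n * θ m + 2 * M / β) = 2 * M * (n - 2) / β := by
      simp only [θ]; field_simp; ring
    have : 0 ≤ 2 * M * (n - 2) / β := by apply div_nonneg <;> nlinarith
    linarith
  have hstep : ∀ m < n, ∀ i, M - |s i| ≤ θ m →
      ∃ j, M - |s i| < M - |s j| ∧ M - |s j| ≤ θ (m + 1) := by
    intro m hm i hi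
    have hv0 : 0 ≤ M - |s i| := by linarith [hs i]
    have hv : 8 * n * (M - |s i|) ≤ M :=
      (mul_le_mul_of_nonneg_left hi (by positivity)).trans (hθ_small m hm)
    have hρβ : (M + 2 * M / 3) / β ≤ 2 * M / β := by gcongr; linarith
    have h2β : 2 * M / β ≤ M / 2 := by rw [div_le_iff₀ hβ0]; nlinarith
    obtain ⟨j, -, hij, hj⟩ := exists_repelled_neighbor (n := n) hs (card_le_univ _) hβ0 (hrep i)
      (by nlinarith) (by nlinarith)
    refine ⟨j, hij, hj.trans ?_⟩
    have := mul_le_mul_of_nonneg_left hi (Nat.cast_nonneg (α := ℝ) n)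
    linarith [hθ_succ m]
  simpa [θ, hi₀] using lt_of_forall_exists_lt_le (fun i => M - |s i|) θ hstep i₀

end Neighbours

theorem abs_le_Mmax {n : ℕ} (hn : 3 ≤ n) (x : Fin n → ℝ) (i : Fin n) : |x i| ≤ Mmax hn x :=
  le_sup' (fun j => |x j|) (mem_univ i)

theorem exists_abs_eq_Mmax {n : ℕ} (hn : 3 ≤ n) (x : Fin n → ℝ) : ∃ i, |x i| = Mmax hn x := by
  obtain ⟨i, -, hi⟩ := exists_mem_eq_sup' (s := univ) ⟨⟨0, by omega⟩, mem_univ _⟩ fun j => |x j|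
  exact ⟨i, hi.symm⟩

theorem state_flipping_absolute_decrease_lower_bound_general
    {n : ℕ} (hn : 3 ≤ n)
    (α β : ℝ) (hα : 0 < α)
    (hα4n : α < 1 / (4 * (n : ℝ)))
    (hβn : β > 16 * (n : ℝ) ^ (n + 1))
    (Np Nd : Fin n → Finset (Fin n))
    (B D : ℝ) (hB : B = 0 ∨ B = 1) (hD : D = 0 ∨ D = 1)
    (s s' : Fin n → ℝ)
    (hupd : ∀ i, s' i = s i - α * B * (∑ j ∈ Np i, (s i - s j))
        - β * D * (∑ j ∈ Nd i, (s i + s j))) :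
    Mmax hn s / (2 * (n : ℝ)) ≤ Mmax hn s' := by
  by_contra! hlt
  set M := Mmax hn s
  have hs := abs_le_Mmax hn s
  have hs' : ∀ i, |s' i| < M / (2 * n) := fun i => (abs_le_Mmax hn s' i).trans_lt hlt
  obtain ⟨i₀, hi₀⟩ := exists_abs_eq_Mmax hn s
  have hn3 : (3 : ℝ) ≤ n := by exact_mod_cast hn
  have hM : 0 < M := by
    have := (abs_nonneg _).trans_lt (hs' i₀)
    exact (div_pos_iff_of_pos_right (by positivity)).1 this
  have hM6 : M / (2 * n) ≤ M / 6 := by gcongr; linarith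
  have hattr : ∀ i, |α * B * ∑ j ∈ Np i, (s i - s j)| < M / 2 := fun i =>
    abs_attraction_lt hs hM hα hα4n hB ((card_le_univ _).trans_eq (Fintype.card_fin n)) i
  rcases hD with rfl | rfl
  · have hupd₀ : s' i₀ = s i₀ - α * B * ∑ j ∈ Np i₀, (s i₀ - s j) := by rw [hupd]; ring
    have hmove := abs_sub_abs_le_abs_sub (s i₀) (α * B * ∑ j ∈ Np i₀, (s i₀ - s j))
    rw [hi₀, ← hupd₀] at hmove
    linarith [hattr i₀, hs' i₀]
  · obtain ⟨i, hi⟩ := exists_lt_abs_sum_add_sub Nd (by rw [Fintype.card_fin]; omega) hs hM hi₀ (by simpa using hβn)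
    have hsplit : β * ∑ j ∈ Nd i, (s i + s j) - s i = -(α * B * ∑ j ∈ Np i, (s i - s j) + s' i) := by
      rw [hupd]; ring
    rw [hsplit, abs_neg] at hi
    linarith [abs_add_le (α * B * ∑ j ∈ Np i, (s i - s j)) (s' i), hattr i, hs' i]

/-- if `α < 1/(4n)` and `β > 16·n^(n+1)`, then for every realization of
the disjoint neighbor sets and attentions `B_t, D_t ∈ {0,1}`, one step of the
state-flipping update satisfies `M(t+1) ≥ M(t)/(2n)`. -/
theorem state_flipping_absolute_decrease_lower_bound
    {n : ℕ} (hn : 3 ≤ n)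
    (α β : ℝ) (hα : 0 < α) (hβ : 0 < β)
    (hα4n : α < 1 / (4 * (n : ℝ)))
    (hβn : β > 16 * (n : ℝ) ^ (n + 1))
    (Np Nd : Fin n → Finset (Fin n))
    (hNp : ∀ i, i ∉ Np i) (hNd : ∀ i, i ∉ Nd i)
    (hdisj : ∀ i, Disjoint (Np i) (Nd i))
    (B D : ℝ) (hB : B = 0 ∨ B = 1) (hD : D = 0 ∨ D = 1)
    (s s' : Fin n → ℝ)
    (hupd : ∀ i, s' i = s i - α * B * (∑ j ∈ Np i, (s i - s j))
        - β * D * (∑ j ∈ Nd i, (s i + s j))) :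
    Mmax hn s / (2 * (n : ℝ)) ≤ Mmax hn s' :=
  state_flipping_absolute_decrease_lower_bound_general hn α β hα hα4n hβn Np Nd B D hB hD s s' hupd
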